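/- Let Λ be an artin algebra with a tilting module T_C lying in C_Λ = Gen(Q̃) ∩ Cogen(Q̃). Then for any projective Λ-module P, if f_P: P → T_P is a minimal left add(T_C)-approximation of P, the module T_P is projective-injective. -/

import Mathlib

open Function LinearMap

section Prelim

variable (Λ : Type) [Ring Λ]

/-- A module that is both projective and injective. -/
def IsProjInj (M : Type) [AddCommGroup M] [Module Λ M] : Prop :=
  Module.Projective Λ M ∧ Module.Injective Λ M

/-- `X` is generated by the projective-injective modules: it is a quotient of a
finitely generated projective-injective module (equivalently, of a finite direct sum of
copies of `Q̃`). -/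
def GenByProjInj (X : Type) [AddCommGroup X] [Module Λ X] : Prop :=
  ∃ Q : ModuleCat.{0} Λ, Module.Finite Λ Q ∧ IsProjInj Λ Q ∧
    ∃ f : Q →ₗ[Λ] X, Surjective f

/-- `X` is cogenerated by the projective-injective modules: it embeds into a
finitely generated projective-injective module. -/
def CogenByProjInj (X : Type) [AddCommGroup X] [Module Λ X] : Prop :=
  ∃ Q : ModuleCat.{0} Λ, Module.Finite Λ Q ∧ IsProjInj Λ Q ∧
    ∃ f : X →ₗ[Λ] Q, Injective f

/-- Membership in `C_Λ = Gen(Q̃) ∩ Cogen(Q̃)`. -/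
def MemC (X : Type) [AddCommGroup X] [Module Λ X] : Prop :=
  GenByProjInj Λ X ∧ CogenByProjInj Λ X

/-- `pdLEcat Λ n X` : `X` has projective dimension at most `n`. -/
def pdLEcat : ℕ → ModuleCat.{0} Λ → Prop
  | 0, X => Module.Projective Λ X
  | n+1, X => ∃ (P : ModuleCat.{0} Λ) (g : P →ₗ[Λ] X),
      Module.Projective Λ P ∧ Module.Finite Λ P ∧ Surjective g ∧
      pdLEcat n (ModuleCat.of Λ (↥(LinearMap.ker g)))

/-- Projective dimension at most `n`, for a bare module. -/
def pdLE (n : ℕ) (X : Type) [AddCommGroup X] [Module Λ X] : Prop :=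
  pdLEcat Λ n (ModuleCat.of Λ X)

/-- `idLEcat Λ n X` : `X` has injective dimension at most `n`. -/
def idLEcat : ℕ → ModuleCat.{0} Λ → Prop
  | 0, X => Module.Injective Λ X
  | n+1, X => ∃ (I : ModuleCat.{0} Λ) (f : X →ₗ[Λ] I),
      Module.Injective Λ I ∧ Injective f ∧
      idLEcat n (ModuleCat.of Λ (↥I ⧸ LinearMap.range f))

/-- Injective dimension at most `n`, for a bare module. -/
def idLE (n : ℕ) (X : Type) [AddCommGroup X] [Module Λ X] : Prop :=
  idLEcat Λ n (ModuleCat.of Λ X)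

/-- Global dimension at most `d` (on finitely generated modules). -/
def GlobalDimLE (d : ℕ) : Prop :=
  ∀ X : ModuleCat.{0} Λ, Module.Finite Λ X → pdLEcat Λ d X

/-- Global dimension exactly `d`. -/
def GlobalDimEq (d : ℕ) : Prop :=
  GlobalDimLE Λ d ∧ ∀ m, GlobalDimLE Λ m → d ≤ m

/-- `Ext¹_Λ(Y, X) = 0`, expressed by the splitting of all short exact sequences
`0 → X → E → Y → 0`. -/
def Ext1Vanish (Y X : Type) [AddCommGroup Y] [Module Λ Y]
    [AddCommGroup X] [Module Λ X] : Prop :=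
  ∀ (E : ModuleCat.{0} Λ) (f : X →ₗ[Λ] E) (g : E →ₗ[Λ] Y),
    Injective f → Surjective g → LinearMap.range f = LinearMap.ker g →
    ∃ r : E →ₗ[Λ] X, r ∘ₗ f = LinearMap.id

/-- `M` belongs to `add T`: `M` is a direct summand of a finite direct sum of copies of `T`. -/
def InAddOf (T M : Type) [AddCommGroup T] [Module Λ T]
    [AddCommGroup M] [Module Λ M] : Prop :=
  ∃ (m : ℕ) (p : (Fin m → T) →ₗ[Λ] M) (s : M →ₗ[Λ] (Fin m → T)),
    p ∘ₗ s = LinearMap.id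

/-- A (classical) tilting module. -/
def IsTilting (T : Type) [AddCommGroup T] [Module Λ T] : Prop :=
  pdLE Λ 1 T ∧ Ext1Vanish Λ T T ∧
  ∃ (T0 T1 : ModuleCat.{0} Λ) (f : Λ →ₗ[Λ] T0) (g : T0 →ₗ[Λ] T1),
    InAddOf Λ T T0 ∧ InAddOf Λ T T1 ∧ Injective f ∧ Surjective g ∧
    LinearMap.range f = LinearMap.ker g

/-- A (classical) cotilting module. -/
def IsCotilting (T : Type) [AddCommGroup T] [Module Λ T] : Prop :=
  idLE Λ 1 T ∧ Ext1Vanish Λ T T ∧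
  ∀ (I : ModuleCat.{0} Λ), Module.Finite Λ I → Module.Injective Λ I →
    ∃ (C0 C1 : ModuleCat.{0} Λ) (u : C0 →ₗ[Λ] C1) (v : C1 →ₗ[Λ] I),
      InAddOf Λ T C0 ∧ InAddOf Λ T C1 ∧ Injective u ∧ Surjective v ∧
      LinearMap.range u = LinearMap.ker v

/-- Dominant dimension at least `2`: there is an exact sequence `0 → Λ → Q₀ → Q₁`
with `Q₀, Q₁` projective-injective. -/
def DomdimGE2 : Prop :=
  ∃ (Q0 Q1 : ModuleCat.{0} Λ) (f : Λ →ₗ[Λ] Q0) (g : Q0 →ₗ[Λ] Q1),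
    Module.Finite Λ Q0 ∧ IsProjInj Λ Q0 ∧ Module.Finite Λ Q1 ∧ IsProjInj Λ Q1 ∧
    Injective f ∧ LinearMap.range f = LinearMap.ker g

/-- An indecomposable (nonzero) module: the only idempotent endomorphisms are `0` and `id`. -/
def Indecomposable (M : Type) [AddCommGroup M] [Module Λ M] : Prop :=
  (∃ x : M, x ≠ 0) ∧ ∀ e : M →ₗ[Λ] M, e ∘ₗ e = e → e = 0 ∨ e = LinearMap.id

/-- A right minimal morphism. -/
def RightMinimal {B C : Type} [AddCommGroup B] [Module Λ B] [AddCommGroup C] [Module Λ C]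
    (f : B →ₗ[Λ] C) : Prop :=
  ∀ g : B →ₗ[Λ] B, f ∘ₗ g = f → Bijective g

/-- A left minimal morphism. -/
def LeftMinimal {A B : Type} [AddCommGroup A] [Module Λ A] [AddCommGroup B] [Module Λ B]
    (f : A →ₗ[Λ] B) : Prop :=
  ∀ g : B →ₗ[Λ] B, g ∘ₗ f = f → Bijective g

/-- `f : P → X` is a projective cover: `P` is projective, `f` is surjective and its kernel
is superfluous. -/
def IsProjCover {P X : Type} [AddCommGroup P] [Module Λ P] [AddCommGroup X] [Module Λ X]
    (f : P →ₗ[Λ] X) : Prop :=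
  Module.Projective Λ P ∧ Surjective f ∧
    ∀ N : Submodule Λ P, N ⊔ LinearMap.ker f = ⊤ → N = ⊤

/-- `f : X → I` is an injective envelope: `I` is injective, `f` is injective and its image is
essential. -/
def IsInjEnv {X I : Type} [AddCommGroup X] [Module Λ X] [AddCommGroup I] [Module Λ I]
    (f : X →ₗ[Λ] I) : Prop :=
  Module.Injective Λ I ∧ Injective f ∧
    ∀ N : Submodule Λ I, N ⊓ LinearMap.range f = ⊥ → N = ⊥

/-- An essential submodule. -/
def IsEssentialSub {M : Type} [AddCommGroup M] [Module Λ M] (N : Submodule Λ M) : Prop :=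
  ∀ N' : Submodule Λ M, N ⊓ N' = ⊥ → N' = ⊥

/-- A uniserial module: submodules are totally ordered by inclusion. -/
def Uniserial (M : Type) [AddCommGroup M] [Module Λ M] : Prop :=
  ∀ N₁ N₂ : Submodule Λ M, N₁ ≤ N₂ ∨ N₂ ≤ N₁

/-- The radical of a module: the intersection of its maximal submodules. -/
def radSub (M : Type) [AddCommGroup M] [Module Λ M] : Submodule Λ M :=
  sInf {N : Submodule Λ M | IsCoatom N}

/-- An almost split (Auslander-Reiten) sequence `0 → A → E → C → 0`. -/
def IsAlmostSplitSeq {A E C : Type} [AddCommGroup A] [Module Λ A]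
    [AddCommGroup E] [Module Λ E] [AddCommGroup C] [Module Λ C]
    (f : A →ₗ[Λ] E) (g : E →ₗ[Λ] C) : Prop :=
  Injective f ∧ Surjective g ∧ LinearMap.range f = LinearMap.ker g ∧
  (¬∃ r : E →ₗ[Λ] A, r ∘ₗ f = LinearMap.id) ∧
  Indecomposable Λ A ∧ Indecomposable Λ C ∧
  ∀ (Z : ModuleCat.{0} Λ) (h : Z →ₗ[Λ] C), Module.Finite Λ Z →
    (¬∃ s : C →ₗ[Λ] Z, h ∘ₗ s = LinearMap.id) → ∃ l : (Z →ₗ[Λ] E), g ∘ₗ l = h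

/-- `N` is the Auslander-Reiten translate `τ M` of `M`: writing `M ≅ P ⊕ (⊕ᵢ Cᵢ)` with `P`
projective and `Cᵢ` indecomposable ends of almost split sequences `0 → Aᵢ → Eᵢ → Cᵢ → 0`,
we have `N ≅ ⊕ᵢ Aᵢ`. -/
def IsTauOf (N M : Type) [AddCommGroup N] [Module Λ N] [AddCommGroup M] [Module Λ M] : Prop :=
  ∃ (r : ℕ) (P : ModuleCat.{0} Λ) (A E C : Fin r → ModuleCat.{0} Λ)
    (f : ∀ i, (A i : Type) →ₗ[Λ] (E i : Type)) (g : ∀ i, (E i : Type) →ₗ[Λ] (C i : Type)),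
    Module.Projective Λ P ∧ (∀ i, IsAlmostSplitSeq Λ (f i) (g i)) ∧
    Nonempty (M ≃ₗ[Λ] (Prod (P : Type) ((i : Fin r) → (C i : Type)))) ∧
    Nonempty (N ≃ₗ[Λ] (∀ i, (A i : Type)))

end Prelim

section HomModule

variable {R : Type} [Ring R] {T M : Type} [AddCommGroup T] [Module R T]
  [AddCommGroup M] [Module R M]

/-- `Hom_R(T, M)` as a left module over `B = End_R(T)ᵒᵖ`, via precomposition. -/
instance instSMulHomEndOp : SMul (Module.End R T)ᵐᵒᵖ (T →ₗ[R] M) :=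
  ⟨fun b f => f ∘ₗ b.unop⟩

lemma endOp_smul_def (b : (Module.End R T)ᵐᵒᵖ) (f : T →ₗ[R] M) :
    b • f = f ∘ₗ b.unop := rfl

instance instMulActionHomEndOp : MulAction (Module.End R T)ᵐᵒᵖ (T →ₗ[R] M) where
  one_smul f := by ext x; rfl
  mul_smul b c f := by ext x; rfl

instance instDistribMulActionHomEndOp :
    DistribMulAction (Module.End R T)ᵐᵒᵖ (T →ₗ[R] M) where
  smul_zero b := by ext x; rfl
  smul_add b f g := by ext x; rfl

instance instModuleHomEndOp : Module (Module.End R T)ᵐᵒᵖ (T →ₗ[R] M) where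
  add_smul b c f := by ext x; simp [endOp_smul_def]
  zero_smul f := by ext x; simp [endOp_smul_def]

end HomModule
/-!
Since `T ∈ Gen(Q̃)` and `T_P ∈ add T`, there is an epimorphism `q : Q → T_P` from a finitely
generated projective-injective `Q`, and `Q ∈ add T` because `Λ ↪ T₀ ∈ add T` and `Q` is injective.
Lifting `f_P` along `q` (`P` is projective) and factoring the lift through the approximation
`f_P` gives `v : T_P → Q` with `q ∘ v ∘ f_P = f_P`; left minimality makes `q ∘ v` an
automorphism, so `T_P` is a direct summand of `Q`.
-/

instance Module.Projective.pi_of_fintype {R : Type*} [Semiring R] {ι : Type*} [Fintype ι]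
    (A : ι → Type*) [∀ i, AddCommMonoid (A i)] [∀ i, Module R (A i)]
    [∀ i, Module.Projective R (A i)] : Module.Projective R (∀ i, A i) :=
  .of_equiv (DFinsupp.linearEquivFunOnFintype (R := R) (M := A))

universe u in
theorem Module.Injective.of_split {R : Type*} [Ring R] {P M : Type u} [AddCommGroup P]
    [Module R P] [AddCommGroup M] [Module R M] [Module.Injective R M]
    (i : P →ₗ[R] M) (s : M →ₗ[R] P) (H : s ∘ₗ i = LinearMap.id) : Module.Injective R P := by
  refine ⟨fun X Y _ _ _ _ f hf g ↦ ?_⟩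
  obtain ⟨h, hh⟩ := Module.Injective.out f hf (i ∘ₗ g)
  refine ⟨s ∘ₗ h, fun x ↦ ?_⟩
  simpa [hh] using DFunLike.congr_fun H (g x)

section AddCategory

variable {Λ : Type} [Ring Λ] {T M N : Type} [AddCommGroup T] [Module Λ T]
  [AddCommGroup M] [Module Λ M] [AddCommGroup N] [Module Λ N]

theorem IsProjInj.of_split (hN : IsProjInj Λ N) (i : M →ₗ[Λ] N) (s : N →ₗ[Λ] M)
    (H : s ∘ₗ i = LinearMap.id) : IsProjInj Λ M :=
  have := hN.1
  have := hN.2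
  ⟨.of_split i s H, .of_split i s H⟩

theorem InAddOf.of_split (hN : InAddOf Λ T N) (i : M →ₗ[Λ] N) (s : N →ₗ[Λ] M)
    (H : s ∘ₗ i = LinearMap.id) : InAddOf Λ T M := by
  obtain ⟨m, p, t, hpt⟩ := hN
  refine ⟨m, s ∘ₗ p, t ∘ₗ i, ?_⟩
  rw [LinearMap.comp_assoc, ← LinearMap.comp_assoc i t p, hpt, LinearMap.id_comp, H]

theorem InAddOf.pi (hN : InAddOf Λ T N) (n : ℕ) : InAddOf Λ T (Fin n → N) := by
  obtain ⟨m, p, s, hps⟩ := hN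
  let e : (Fin (n * m) → T) ≃ₗ[Λ] (Fin n → Fin m → T) :=
    (LinearEquiv.funCongrLeft Λ T finProdFinEquiv).trans (LinearEquiv.curry Λ T (Fin n) (Fin m))
  refine ⟨n * m, p.compLeft (Fin n) ∘ₗ e.toLinearMap, e.symm.toLinearMap ∘ₗ s.compLeft (Fin n), ?_⟩
  refine LinearMap.ext fun x ↦ funext fun i ↦ ?_
  simpa using DFunLike.congr_fun hps (x i)

theorem GenByProjInj.of_inAddOf (hT : GenByProjInj Λ T) (hM : InAddOf Λ T M) :
    GenByProjInj Λ M := by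
  obtain ⟨Q, _, hQ, π, hπ⟩ := hT
  obtain ⟨m, p, s, hps⟩ := hM
  have hp : Function.Surjective p := Function.LeftInverse.surjective (DFunLike.congr_fun hps)
  refine ⟨ModuleCat.of Λ (Fin m → Q), inferInstanceAs (Module.Finite Λ (Fin m → Q)),
    ⟨?_, ?_⟩, p ∘ₗ π.compLeft (Fin m), hp.comp hπ.comp_left⟩
  · have := hQ.1
    exact inferInstanceAs (Module.Projective Λ (Fin m → Q))
  · have := hQ.2
    exact inferInstanceAs (Module.Injective Λ (Fin m → Q))

/-- A finitely generated projective module embeds into `Λⁿ ↪ T₀ⁿ`, and the embedding splits when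
the module is also injective. -/
theorem IsTilting.inAddOf_of_projective_of_injective (hT : IsTilting Λ T) [Module.Finite Λ M]
    [Module.Projective Λ M] [Module.Injective Λ M] : InAddOf Λ T M := by
  obtain ⟨-, -, T₀, -, ι, -, hT₀, -, hι, -, -⟩ := hT
  obtain ⟨n, π, hπ⟩ := Module.Finite.exists_fin' Λ M
  obtain ⟨s, hs⟩ := Module.projective_lifting_property π LinearMap.id hπ
  have hs_inj : Function.Injective s :=
    Function.LeftInverse.injective (DFunLike.congr_fun hs)
  obtain ⟨r, hr⟩ := Module.Injective.out (ι.compLeft (Fin n) ∘ₗ s) (hι.comp_left.comp hs_inj)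
    LinearMap.id
  exact (hT₀.pi n).of_split _ r (LinearMap.ext hr)

end AddCategory

theorem LeftMinimal.exists_split_of_surjective {Λ : Type} [Ring Λ] {P X Q : Type}
    [AddCommGroup P] [Module Λ P] [AddCommGroup X] [Module Λ X] [AddCommGroup Q] [Module Λ Q]
    [Module.Projective Λ P] {f : P →ₗ[Λ] X} (hmin : LeftMinimal Λ f)
    (q : Q →ₗ[Λ] X) (hq : Function.Surjective q)
    (hfactor : ∀ u : P →ₗ[Λ] Q, ∃ v : X →ₗ[Λ] Q, v ∘ₗ f = u) :
    ∃ (i : X →ₗ[Λ] Q) (s : Q →ₗ[Λ] X), s ∘ₗ i = LinearMap.id := by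
  obtain ⟨u, hu⟩ := Module.projective_lifting_property q f hq
  obtain ⟨v, hv⟩ := hfactor u
  have hqv : (q ∘ₗ v) ∘ₗ f = f := by rw [LinearMap.comp_assoc, hv, hu]
  let e := LinearEquiv.ofBijective (q ∘ₗ v) (hmin _ hqv)
  exact ⟨v, e.symm.toLinearMap ∘ₗ q, LinearMap.ext fun x ↦ e.symm_apply_apply x⟩

theorem stmt9_general (Λ : Type) [Ring Λ]
    (T : Type) [AddCommGroup T] [Module Λ T]
    (hT : IsTilting Λ T) (hTC : MemC Λ T)
    (P : Type) [AddCommGroup P] [Module Λ P]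
    (hP : Module.Projective Λ P)
    (TP : Type) [AddCommGroup TP] [Module Λ TP]
    (f : P →ₗ[Λ] TP) (hadd : InAddOf Λ T TP) (hmin : LeftMinimal Λ f)
    (happrox : ∀ (T' : ModuleCat.{0} Λ) (g : P →ₗ[Λ] (T' : Type)), InAddOf Λ T (T' : Type) →
      ∃ h : TP →ₗ[Λ] (T' : Type), h ∘ₗ f = g) :
    IsProjInj Λ TP := by
  obtain ⟨Q, _, hQ, q, hq⟩ := hTC.1.of_inAddOf hadd
  have := hQ.1
  have := hQ.2
  have hQT : InAddOf Λ T Q := hT.inAddOf_of_projective_of_injective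
  obtain ⟨i, s, hsi⟩ := hmin.exists_split_of_surjective q hq (fun u ↦ happrox Q u hQT)
  exact hQ.of_split i s hsi

theorem stmt9 (Λ : Type) [Ring Λ] (k : Type) [CommRing k] [IsArtinianRing k] [Algebra k Λ]
    [Module.Finite k Λ]
    (T : Type) [AddCommGroup T] [Module Λ T] [Module.Finite Λ T]
    (hT : IsTilting Λ T) (hTC : MemC Λ T)
    (P : Type) [AddCommGroup P] [Module Λ P] [Module.Finite Λ P]
    (hP : Module.Projective Λ P)
    (TP : Type) [AddCommGroup TP] [Module Λ TP]
    (f : P →ₗ[Λ] TP) (hadd : InAddOf Λ T TP) (hmin : LeftMinimal Λ f)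
    (happrox : ∀ (T' : ModuleCat.{0} Λ) (g : P →ₗ[Λ] (T' : Type)), InAddOf Λ T (T' : Type) →
      ∃ h : TP →ₗ[Λ] (T' : Type), h ∘ₗ f = g) :
    IsProjInj Λ TP :=
  stmt9_general Λ T hT hTC P hP TP f hadd hmin happrox
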